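/- arXiv:2110.07080 — 6 statements merged into one kernel-verified Lean document; each statement's English description precedes it below -/
import Mathlib

section
/- Let n ≥ 1 and let N₁, N₂, N₃, N₄, N₅ be pairwise commuting nilpotent n×n complex matrices satisfying exp(N₁)² = exp(N₂), exp(N₂)² = exp(N₁)·exp(N₃), exp(N₃)² = exp(N₂)·exp(N₄), and exp(N₄)² = exp(N₃)·exp(N₅), where exp denotes the matrix exponential. Then N_k = k·N₁ for every k = 1,…,5; in particular all five matrices are rational multiples of N₁. -/
/-!
Writing `T₀ = 1`, the relations `T_k ^ 2 = T_{k-1} T_{k+1}` determine `T_{k+1}` from `T_{k-1}` and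
`T_k` by cancelling the unit `T_{k-1}`, so inductively `exp N_k = (exp N₁) ^ k = exp (k • N₁)`.
For commuting nilpotents the exponential is injective: `exp a - 1 = a * u` with `u` a unit of the
form `1 + (nilpotent)`, so `exp a = 1` forces `a = 0`. Hence `N_k = k • N₁`.
-/

open NormedSpace Finset

section NilpotentExp

variable {A : Type*} [Ring A] [Algebra ℚ A]

theorem sum_range_succ_smul_pow (c : ℕ → ℚ) (a : A) (k : ℕ) :
    ∑ i ∈ range (k + 1), c i • a ^ i = c 0 • 1 + a * ∑ i ∈ range k, c (i + 1) • a ^ i := by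
  rw [sum_range_succ', add_comm, mul_sum, pow_zero]
  congr 1
  exact sum_congr rfl fun i _ => by rw [mul_smul_comm, pow_succ']

theorem IsNilpotent.isUnit_sum_smul_pow {a : A} (ha : IsNilpotent a) {c : ℕ → ℚ} (hc : c 0 = 1)
    (k : ℕ) : IsUnit (∑ i ∈ range (k + 1), c i • a ^ i) := by
  rw [sum_range_succ_smul_pow, hc, one_smul]
  refine (Commute.isNilpotent_mul_right ?_ ha).isUnit_one_add
  exact Commute.sum_right _ _ _ fun i _ => ((Commute.refl a).pow_right i).smul_right _

theorem IsNilpotent.eq_zero_of_exp_eq_one {a : A} (ha : IsNilpotent a)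
    (h : IsNilpotent.exp a = 1) : a = 0 := by
  have ⟨k, hk⟩ := ha
  have hexp : IsNilpotent.exp a =
      1 + a * ∑ i ∈ range (k + 1), ((i + 1).factorial : ℚ)⁻¹ • a ^ i := by
    rw [IsNilpotent.exp_eq_sum (pow_eq_zero_of_le (Nat.le_add_right k 2) hk),
      sum_range_succ_smul_pow]
    simp
  rw [hexp, add_eq_left] at h
  exact (ha.isUnit_sum_smul_pow (c := fun i => ((i + 1).factorial : ℚ)⁻¹) (by simp) k
    |>.mul_left_eq_zero).mp h

theorem IsNilpotent.eq_of_exp_eq_exp {a b : A} (hab : Commute a b) (ha : IsNilpotent a)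
    (hb : IsNilpotent b) (h : IsNilpotent.exp a = IsNilpotent.exp b) : a = b := by
  have hsub : IsNilpotent (a - b) := hab.isNilpotent_sub ha hb
  have hexp : IsNilpotent.exp (a - b) * IsNilpotent.exp b = 1 * IsNilpotent.exp b := by
    rw [← IsNilpotent.exp_add_of_commute (hab.sub_left (Commute.refl b)) hsub hb,
      sub_add_cancel, h, one_mul]
  exact sub_eq_zero.mp (hsub.eq_zero_of_exp_eq_one ((isUnit_exp hb).mul_right_cancel hexp))

theorem IsNilpotent.exp_nsmul {a : A} (ha : IsNilpotent a) (k : ℕ) :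
    IsNilpotent.exp (k • a) = IsNilpotent.exp a ^ k := by
  induction k with
  | zero => simp
  | succ k ih =>
    rw [succ_nsmul, _root_.pow_succ, ← ih, IsNilpotent.exp_add_of_commute
      ((Commute.refl a).smul_left k) (ha.smul k) ha]

end NilpotentExp

theorem NormedSpace.exp_eq_isNilpotent_exp {𝔸 : Type*} [Ring 𝔸] [Algebra ℚ 𝔸]
    [TopologicalSpace 𝔸] [IsTopologicalRing 𝔸] {a : 𝔸} (ha : IsNilpotent a) :
    exp a = IsNilpotent.exp a := by
  obtain ⟨k, hk⟩ := ha
  rw [exp_eq_tsum_rat, IsNilpotent.exp_eq_sum hk]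
  exact tsum_eq_sum fun i hi => by
    rw [pow_eq_zero_of_le (by simpa using hi) hk, smul_zero]

theorem eq_pow_of_sq_eq_pow_mul {M : Type*} [Monoid M] {x y z : M} {k : ℕ} (hx : IsUnit x)
    (hy : y = x ^ (k + 1)) (h : y ^ 2 = x ^ k * z) : z = x ^ (k + 2) := by
  refine (hx.pow k).mul_left_cancel ?_
  rw [← h, hy, ← pow_mul, ← pow_add]
  ring_nf

theorem NormedSpace.eq_nsmul_of_exp_eq_pow {𝔸 : Type*} [Ring 𝔸] [Algebra ℚ 𝔸]
    [TopologicalSpace 𝔸] [IsTopologicalRing 𝔸] {a b : 𝔸} (hab : Commute a b)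
    (ha : IsNilpotent a) (hb : IsNilpotent b) {k : ℕ} (h : exp b = exp a ^ k) : b = k • a := by
  refine IsNilpotent.eq_of_exp_eq_exp (hab.symm.smul_right k) hb (ha.smul k) ?_
  rw [← exp_eq_isNilpotent_exp hb, h, exp_eq_isNilpotent_exp ha, IsNilpotent.exp_nsmul ha]

theorem stmt_1_general (n : ℕ)
    (N₁ N₂ N₃ N₄ N₅ : Matrix (Fin n) (Fin n) ℂ)
    (hnil : ∀ X ∈ [N₁, N₂, N₃, N₄, N₅], IsNilpotent X)
    (hcomm : ∀ X ∈ [N₁, N₂, N₃, N₄, N₅], ∀ Y ∈ [N₁, N₂, N₃, N₄, N₅], Commute X Y)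
    (h1 : exp N₁ ^ 2 = exp N₂)
    (h2 : exp N₂ ^ 2 = exp N₁ * exp N₃)
    (h3 : exp N₃ ^ 2 = exp N₂ * exp N₄)
    (h4 : exp N₄ ^ 2 = exp N₃ * exp N₅) :
    N₁ = (1 : ℂ) • N₁ ∧ N₂ = (2 : ℂ) • N₁ ∧ N₃ = (3 : ℂ) • N₁ ∧
      N₄ = (4 : ℂ) • N₁ ∧ N₅ = (5 : ℂ) • N₁ := by
  have hunit : IsUnit (exp N₁) := Matrix.isUnit_exp N₁
  have e2 : exp N₂ = exp N₁ ^ 2 := h1.symm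
  have e3 : exp N₃ = exp N₁ ^ 3 := eq_pow_of_sq_eq_pow_mul hunit e2 (by rwa [pow_one])
  have e4 : exp N₄ = exp N₁ ^ 4 := eq_pow_of_sq_eq_pow_mul hunit e3 (by rwa [← e2])
  have e5 : exp N₅ = exp N₁ ^ 5 := eq_pow_of_sq_eq_pow_mul hunit e4 (by rwa [← e3])
  have hlog : ∀ X ∈ [N₁, N₂, N₃, N₄, N₅], ∀ k : ℕ, exp X = exp N₁ ^ k → X = (k : ℂ) • N₁ :=
    fun X hX k hk => by
      rw [Nat.cast_smul_eq_nsmul]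
      exact eq_nsmul_of_exp_eq_pow (hcomm N₁ (by simp) X hX) (hnil N₁ (by simp)) (hnil X hX) hk
  exact ⟨(one_smul ℂ N₁).symm, by exact_mod_cast hlog N₂ (by simp) 2 e2,
    by exact_mod_cast hlog N₃ (by simp) 3 e3, by exact_mod_cast hlog N₄ (by simp) 4 e4,
    by exact_mod_cast hlog N₅ (by simp) 5 e5⟩

/-- **Lemma 5.2.** If `N₁,…,N₅` are pairwise commuting nilpotent `n × n` complex matrices
(`n ≥ 1`) whose exponentials satisfy the relations coming from the resolution graph of the
`A₉`-singularity, namely `exp(N₁)² = exp(N₂)`, `exp(N₂)² = exp(N₁)exp(N₃)`,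
`exp(N₃)² = exp(N₂)exp(N₄)`, `exp(N₄)² = exp(N₃)exp(N₅)`, then `N_k = k·N₁` for
`k = 1,…,5`. -/
theorem stmt_1 (n : ℕ) (hn : 1 ≤ n)
    (N₁ N₂ N₃ N₄ N₅ : Matrix (Fin n) (Fin n) ℂ)
    (hnil : ∀ X ∈ [N₁, N₂, N₃, N₄, N₅], IsNilpotent X)
    (hcomm : ∀ X ∈ [N₁, N₂, N₃, N₄, N₅], ∀ Y ∈ [N₁, N₂, N₃, N₄, N₅], Commute X Y)
    (h1 : exp N₁ ^ 2 = exp N₂)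
    (h2 : exp N₂ ^ 2 = exp N₁ * exp N₃)
    (h3 : exp N₃ ^ 2 = exp N₂ * exp N₄)
    (h4 : exp N₄ ^ 2 = exp N₃ * exp N₅) :
    N₁ = (1 : ℂ) • N₁ ∧ N₂ = (2 : ℂ) • N₁ ∧ N₃ = (3 : ℂ) • N₁ ∧
      N₄ = (4 : ℂ) • N₁ ∧ N₅ = (5 : ℂ) • N₁ :=
  stmt_1_general n N₁ N₂ N₃ N₄ N₅ hnil hcomm h1 h2 h3 h4
end

section
/- Let u = (5,−5,−2,1,0,1), v = (1,0,1,2,5,−5), u' = (5,−2,−5,0,1,1), v' = (1,1,0,5,2,−5) in ℚ⁶, and set A := u·vᵀ and B := u'·v'ᵀ (6×6 rational matrices). Then A·B = B·A = A² = B² = 0, A and B each have rank 1, and for all nonzero rationals s, t the matrix s·A + t·B has rank 2 and satisfies (s·A + t·B)² = 0. -/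
/-!
All four products vanish because `v` and `v'` are orthogonal to both `u` and `u'`, so
`(s • A + t • B) ^ 2 = 0` as well. For the ranks, a sum `∑ i, u i ⬝ v iᵀ` of `k` rank-one
matrices factors as `U * V` with `U` of `k` independent columns and `V` of `k` independent rows;
`V` is then surjective, so the rank is that of `U`, namely `k`. Since `u, u'` and `v, v'` are
linearly independent, this gives rank one for `A`, `B` and rank two for `s • A + t • B`.
-/

open Matrix

namespace Matrix

variable {K ι l m n : Type*}

theorem vecMulVec_mul_vecMulVec_eq_zero [NonUnitalSemiring K] [Fintype m] {u : l → K}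
    {v w : m → K} {x : n → K} (h : v ⬝ᵥ w = 0) : vecMulVec u v * vecMulVec w x = 0 := by
  ext
  simp [vecMulVec_mul_vecMulVec, h, vecMulVec_apply]

variable [Field K] [Fintype ι]

theorem rank_mul_of_linearIndependent_col_of_linearIndependent_row [Fintype n]
    {U : Matrix m ι K} {V : Matrix ι n K}
    (hU : LinearIndependent K U.col) (hV : LinearIndependent K V.row) :
    (U * V).rank = Fintype.card ι := by
  have hV_surj : LinearMap.range V.mulVecLin = ⊤ :=
    Submodule.eq_top_of_finrank_eq <| by
      rw [← rank, hV.rank_matrix, Module.finrank_fintype_fun_eq_card]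
  rw [rank, mulVecLin_mul, LinearMap.range_comp_of_range_eq_top _ hV_surj, ← rank,
    rank_eq_finrank_span_cols, linearIndependent_iff_card_eq_finrank_span.mp hU, Set.finrank]

theorem rank_sum_vecMulVec [Fintype n] {u : ι → m → K} {v : ι → n → K}
    (hu : LinearIndependent K u) (hv : LinearIndependent K v) :
    (∑ i, vecMulVec (u i) (v i)).rank = Fintype.card ι := by
  have h : ∑ i, vecMulVec (u i) (v i) = (of u)ᵀ * of v := by
    ext a b
    simp [mul_apply, vecMulVec_apply, Matrix.sum_apply]
  rw [h]
  exact rank_mul_of_linearIndependent_col_of_linearIndependent_row hu hv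

theorem rank_vecMulVec_of_ne_zero [Fintype n] {u : m → K} {v : n → K} (hu : u ≠ 0) (hv : v ≠ 0) :
    (vecMulVec u v).rank = 1 := by
  simpa using rank_sum_vecMulVec (u := ![u]) (v := ![v])
    (.of_subsingleton 0 hu) (.of_subsingleton 0 hv)

theorem rank_vecMulVec_add_vecMulVec [Fintype n] {u₁ u₂ : m → K} {v₁ v₂ : n → K}
    (hu : LinearIndependent K ![u₁, u₂]) (hv : LinearIndependent K ![v₁, v₂]) :
    (vecMulVec u₁ v₁ + vecMulVec u₂ v₂).rank = 2 := by
  simpa [Fin.sum_univ_two] using rank_sum_vecMulVec hu hv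

end Matrix

/-- The rank-one monodromy logarithms at the node `p₁` (eq. (5.10)): each generator is of
type I₁ (rank one, square zero), products vanish, and every interior element
`s·A + t·B` (`s,t ≠ 0`) is of type I₂ (rank two, square zero). -/
theorem stmt_8 (u v u' v' : Fin 6 → ℚ)
    (hu : u = ![5, -5, -2, 1, 0, 1]) (hv : v = ![1, 0, 1, 2, 5, -5])
    (hu' : u' = ![5, -2, -5, 0, 1, 1]) (hv' : v' = ![1, 1, 0, 5, 2, -5])
    (A B : Matrix (Fin 6) (Fin 6) ℚ)
    (hA : A = vecMulVec u v) (hB : B = vecMulVec u' v') :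
    A * B = 0 ∧ B * A = 0 ∧ A * A = 0 ∧ B * B = 0 ∧ A.rank = 1 ∧ B.rank = 1 ∧
      ∀ s t : ℚ, s ≠ 0 → t ≠ 0 →
        (s • A + t • B).rank = 2 ∧ (s • A + t • B) ^ 2 = 0 := by
  have hAB : A * B = 0 := hA ▸ hB ▸ vecMulVec_mul_vecMulVec_eq_zero
    (by simp [hv, hu', dotProduct, Fin.sum_univ_succ])
  have hBA : B * A = 0 := hA ▸ hB ▸ vecMulVec_mul_vecMulVec_eq_zero
    (by simp [hv', hu, dotProduct, Fin.sum_univ_succ])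
  have hAA : A * A = 0 := hA ▸ vecMulVec_mul_vecMulVec_eq_zero
    (by simp [hv, hu, dotProduct, Fin.sum_univ_succ])
  have hBB : B * B = 0 := hB ▸ vecMulVec_mul_vecMulVec_eq_zero
    (by simp [hv', hu', dotProduct, Fin.sum_univ_succ])
  have hu_ne : u ≠ 0 := fun h => by simpa [hu] using congrFun h 0
  have hu'_ne : u' ≠ 0 := fun h => by simpa [hu'] using congrFun h 0
  have hv_indep : LinearIndependent ℚ ![v, v'] := by
    refine LinearIndependent.pair_iff.mpr fun a b hab => ?_
    have hb : b = 0 := by simpa [hv, hv'] using congrFun hab 1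
    have hab0 : a + b = 0 := by simpa [hv, hv'] using congrFun hab 0
    exact ⟨by linarith, hb⟩
  have hu_indep : ∀ s t : ℚ, s ≠ 0 → t ≠ 0 → LinearIndependent ℚ ![s • u, t • u'] := by
    intro s t hs ht
    refine LinearIndependent.pair_iff.mpr fun a b hab => ?_
    have has : a = 0 ∨ s = 0 := by simpa [hu, hu'] using congrFun hab 3
    have hbt : b = 0 ∨ t = 0 := by simpa [hu, hu'] using congrFun hab 4
    exact ⟨has.resolve_right hs, hbt.resolve_right ht⟩
  refine ⟨hAB, hBA, hAA, hBB, hA ▸ rank_vecMulVec_of_ne_zero hu_ne (hv_indep.ne_zero 0),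
    hB ▸ rank_vecMulVec_of_ne_zero hu'_ne (hv_indep.ne_zero 1), fun s t hs ht => ⟨?_, ?_⟩⟩
  · rw [hA, hB, ← smul_vecMulVec, ← smul_vecMulVec]
    exact rank_vecMulVec_add_vecMulVec (hu_indep s t hs ht) hv_indep
  · simp [sq, add_mul, mul_add, hAA, hAB, hBA, hBB]
end

section
/- Let N be the 6×6 rational matrix whose only nonzero entries are N₁₂ = −1, N₁₃ = −1, N₂₄ = −22, N₂₅ = −13, N₃₄ = −13, N₃₅ = −22, N₄₆ = 1, N₅₆ = 1. Then: (i) N_x, N_y and N are nilpotent; (ii) each X ∈ {N_x, N_y, N} satisfies Xᵀ·Q + Q·X = 0 (i.e., lies in the symplectic Lie algebra of Q); (iii) N_x·N_y = N_y·N_x; (iv) N·(N_x + N_y) = (N_x + N_y)·N; and (v) N·N_x ≠ N_x·N. -/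
open Matrix

/-- The symplectic form `Q` of the (1,2,2,1) family (eq. (5.3)). -/
def Qm : Matrix (Fin 6) (Fin 6) ℚ :=
  !![0, 0, 0, 0, 0, -1;
     0, 0, 0, 0, -1, 0;
     0, 0, 0, -1, 0, 0;
     0, 0, 1, 0, 0, 0;
     0, 1, 0, 0, 0, 0;
     1, 0, 0, 0, 0, 0]

/-- The monodromy logarithm `N_x` (modulo weight-filtration level, eq. (6.6)). -/
def Nx : Matrix (Fin 6) (Fin 6) ℚ :=
  !![0, -1, 0, 0, 0, 0;
     0, 0, 0, -10, -5, 0;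
     0, 0, 0, -10, -10, 0;
     0, 0, 0, 0, 0, 0;
     0, 0, 0, 0, 0, 1;
     0, 0, 0, 0, 0, 0]

/-- The monodromy logarithm `N_y` (modulo weight-filtration level, eq. (6.6)). -/
def Ny : Matrix (Fin 6) (Fin 6) ℚ :=
  !![0, 0, -1, 0, 0, 0;
     0, 0, 0, -10, -10, 0;
     0, 0, 0, -5, -10, 0;
     0, 0, 0, 0, 0, 1;
     0, 0, 0, 0, 0, 0;
     0, 0, 0, 0, 0, 0]

/-- The rational nilpotent element `N` of eq. (8.14). -/
def Nmat : Matrix (Fin 6) (Fin 6) ℚ :=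
  !![0, -1, -1, 0, 0, 0;
     0, 0, 0, -22, -13, 0;
     0, 0, 0, -13, -22, 0;
     0, 0, 0, 0, 0, 1;
     0, 0, 0, 0, 0, 1;
     0, 0, 0, 0, 0, 0]

/-! `N_x`, `N_y` and `N` are strictly upper triangular, hence nilpotent by Cayley–Hamilton; the
rest is matrix arithmetic over `ℚ`. `N` fails to commute with `N_x` already in entry `(1, 4)`:
`(N N_x)₁₄ = 20` but `(N_x N)₁₄ = 22`. -/

theorem Matrix.IsUpperTriangular.isNilpotent_of_diag_eq_zero {n R : Type*} [Fintype n]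
    [LinearOrder n] [CommRing R] {M : Matrix n n R} (hM : M.IsUpperTriangular) (hd : M.diag = 0) :
    IsNilpotent M :=
  ⟨Fintype.card n, by
    simpa [charpoly_of_isUpperTriangular M hM, ← diag_apply, hd] using aeval_self_charpoly M⟩

/-- Appendix A.2: `N_x`, `N_y`, `N` are nilpotent elements of the symplectic Lie algebra
of `Q`; `N_x` and `N_y` commute; `N` commutes with `N_x + N_y` but not with `N_x`. -/
theorem stmt_10 :
    (IsNilpotent Nx ∧ IsNilpotent Ny ∧ IsNilpotent Nmat) ∧
    (∀ X ∈ [Nx, Ny, Nmat], Xᵀ * Qm + Qm * X = 0) ∧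
    Nx * Ny = Ny * Nx ∧
    Nmat * (Nx + Ny) = (Nx + Ny) * Nmat ∧
    Nmat * Nx ≠ Nx * Nmat := by
  refine ⟨⟨?_, ?_, ?_⟩, by decide +kernel, by decide +kernel, by decide +kernel, by decide +kernel⟩
  all_goals exact IsUpperTriangular.isNilpotent_of_diag_eq_zero (by decide) (by decide +kernel)
end

section
/- Let a, b, k be positive integers with k² = a·b, and let N'_{a,b} be the 6×6 rational matrix with rows (0, 2k, b, a, 0, 0), (−2k, 0, b, a, 0, 0), (a, a, 0, 0, 0, a), (b, b, 0, 0, 0, −b), (0, 0, b, −a, 0, 0), (0, 0, 0, 0, 0, 0). Then: (i) (N'_{a,b})³ = 0; (ii) N'_{a,b}·(a·N₁ + b·N₂) = (a·N₁ + b·N₂)·N'_{a,b}; (iii) (N'_{a,b})ᵀ·Q_w + Q_w·N'_{a,b} = 0; and (iv) N'_{a,b} does not lie in the ℚ-linear span of N₁ and N₂. -/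
open Matrix

/-- The symmetric bilinear form `Q_w` of Watanabe's (2,2,2) example. -/
def Qw : Matrix (Fin 6) (Fin 6) ℚ :=
  !![-1, 0, 0, 0, 0, 0;
     0, -1, 0, 0, 0, 0;
     0, 0, 0, 1, 0, 0;
     0, 0, 1, 0, 0, 0;
     0, 0, 0, 0, 0, 1;
     0, 0, 0, 0, 1, 0]

/-- Watanabe's nilpotent element `N₁`: only nonzero entries `(N₁)₃₆ = −1`, `(N₁)₅₄ = 1`. -/
def N1 : Matrix (Fin 6) (Fin 6) ℚ :=
  !![0, 0, 0, 0, 0, 0;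
     0, 0, 0, 0, 0, 0;
     0, 0, 0, 0, 0, -1;
     0, 0, 0, 0, 0, 0;
     0, 0, 0, 1, 0, 0;
     0, 0, 0, 0, 0, 0]

/-- Watanabe's nilpotent element `N₂`: only nonzero entries `(N₂)₄₆ = 1`, `(N₂)₅₃ = −1`. -/
def N2 : Matrix (Fin 6) (Fin 6) ℚ :=
  !![0, 0, 0, 0, 0, 0;
     0, 0, 0, 0, 0, 0;
     0, 0, 0, 0, 0, 0;
     0, 0, 0, 0, 0, 1;
     0, 0, -1, 0, 0, 0;
     0, 0, 0, 0, 0, 0]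

/-- The generalized element `N'_{a,b}` of Appendix A.1 (with `k² = ab`). -/
def N'ab (a b k : ℕ) : Matrix (Fin 6) (Fin 6) ℚ :=
  !![0, 2 * (k : ℚ), (b : ℚ), (a : ℚ), 0, 0;
     -(2 * (k : ℚ)), 0, (b : ℚ), (a : ℚ), 0, 0;
     (a : ℚ), (a : ℚ), 0, 0, 0, (a : ℚ);
     (b : ℚ), (b : ℚ), 0, 0, 0, -(b : ℚ);
     0, 0, (b : ℚ), -(a : ℚ), 0, 0;
     0, 0, 0, 0, 0, 0]

lemma cv5 {α : Type*} (x : α) (u : Fin 5 → α) : Matrix.vecCons x u 5 = u 4 := rfl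

lemma NT (a b k : ℕ) : (N'ab a b k)ᵀ =
  !![0, -(2 * (k : ℚ)), (a : ℚ), (b : ℚ), 0, 0;
     2 * (k : ℚ), 0, (a : ℚ), (b : ℚ), 0, 0;
     (b : ℚ), (b : ℚ), 0, 0, (b : ℚ), 0;
     (a : ℚ), (a : ℚ), 0, 0, -(a : ℚ), 0;
     0, 0, 0, 0, 0, 0;
     0, 0, (a : ℚ), -(b : ℚ), 0, 0] := by
  rw [← Matrix.ext_iff]
  simp [Fin.forall_fin_succ, N'ab, Matrix.transpose_apply, cv5, Matrix.vecHead, Matrix.vecTail]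

set_option maxHeartbeats 4000000 in
lemma Nsq (a b k : ℕ) (hk2 : (k:ℚ) * k = (a:ℚ) * b) :
    N'ab a b k * N'ab a b k =
  !![-(2*(a:ℚ)*b), 2*(a:ℚ)*b, 2*(b:ℚ)*k, 2*(a:ℚ)*k, 0, 0;
     2*(a:ℚ)*b, -(2*(a:ℚ)*b), -(2*(b:ℚ)*k), -(2*(a:ℚ)*k), 0, 0;
     -(2*(a:ℚ)*k), 2*(a:ℚ)*k, 2*(a:ℚ)*b, 2*(a:ℚ)*a, 0, 0;
     -(2*(b:ℚ)*k), 2*(b:ℚ)*k, 2*(b:ℚ)*b, 2*(a:ℚ)*b, 0, 0;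
     0, 0, 0, 0, 0, 2*(a:ℚ)*b;
     0, 0, 0, 0, 0, 0] := by
  rw [← Matrix.ext_iff]
  simp [Fin.forall_fin_succ, N'ab, Matrix.mul_apply, Fin.sum_univ_six, cv5,
    Matrix.vecHead, Matrix.vecTail]
  repeat' constructor
  all_goals nlinarith [hk2]

set_option maxHeartbeats 4000000 in
/-- Appendix A.1, final generalization: for positive integers `a, b, k` with `k² = ab`,
the matrix `N'_{a,b}` is 3-step nilpotent, commutes with `aN₁ + bN₂`, lies in the Lie
algebra of `Aut(Q_w)`, and does not lie in the ℚ-span of `N₁, N₂`. -/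
theorem stmt_12 (a b k : ℕ) (ha : 0 < a) (hb : 0 < b) (hk : 0 < k) (hab : k ^ 2 = a * b) :
    (N'ab a b k) ^ 3 = 0 ∧
    N'ab a b k * ((a : ℚ) • N1 + (b : ℚ) • N2) =
      ((a : ℚ) • N1 + (b : ℚ) • N2) * N'ab a b k ∧
    (N'ab a b k)ᵀ * Qw + Qw * N'ab a b k = 0 ∧
    ¬ ∃ p q : ℚ, N'ab a b k = p • N1 + q • N2 := by
  have hk2 : (k:ℚ) * k = (a:ℚ) * (b:ℚ) := by
    have : ((k:ℚ))^2 = ((a:ℚ)) * b := by exact_mod_cast congrArg (Nat.cast : ℕ → ℚ) hab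
    nlinarith [this]
  refine ⟨?_, ?_, ?_, ?_⟩
  · rw [pow_succ, pow_two, Nsq a b k hk2, ← Matrix.ext_iff]
    simp [Fin.forall_fin_succ, N'ab, Matrix.mul_apply, Fin.sum_univ_six, cv5,
      Matrix.vecHead, Matrix.vecTail]
    repeat' constructor
    all_goals nlinarith [hk2]
  · rw [← Matrix.ext_iff]
    simp [Fin.forall_fin_succ, N'ab, N1, N2, Matrix.mul_apply, Fin.sum_univ_six, cv5,
      Matrix.vecHead, Matrix.vecTail]
    exact ⟨by ring, by ring⟩
  · rw [NT, ← Matrix.ext_iff]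
    simp [Fin.forall_fin_succ, N'ab, Qw, Matrix.mul_apply, Fin.sum_univ_six, cv5,
      Matrix.vecHead, Matrix.vecTail]
  · rintro ⟨p, q, h⟩
    have h20 := congrFun (congrFun h 2) 0
    simp [N'ab, N1, N2, Matrix.vecHead, Matrix.vecTail] at h20
    have : (0:ℚ) < (a:ℚ) := by exact_mod_cast ha
    linarith
end

section
/- Let a, b be real numbers, set v := (a + b·i)·e₁ + e₆ in ℂ⁆ (e₁,…,e₆ the standard basis of ℂ⁶, i the imaginary unit), and let S := N_x + N_y. Extend Q ℂ-bilinearly, i.e., Q(x,y) := xᵀ·Q·y for x, y ∈ ℂ⁶, and let conj denote componentwise complex conjugation. Then for every real number h: (−i)·Q(exp(i·h·S)·v, conj(exp(i·h·S)·v)) = (280·h³ − 6·b)/3, where exp denotes the matrix exponential. -/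
open Matrix NormedSpace

/-- The symplectic form `Q` of the (1,2,2,1) family (eq. (5.3)), as a complex matrix. -/
def QC : Matrix (Fin 6) (Fin 6) ℂ :=
  !![0, 0, 0, 0, 0, -1;
     0, 0, 0, 0, -1, 0;
     0, 0, 0, -1, 0, 0;
     0, 0, 1, 0, 0, 0;
     0, 1, 0, 0, 0, 0;
     1, 0, 0, 0, 0, 0]

/-- The ℂ-bilinear extension of `Q`: `Q(x,y) = xᵀ·Q·y`. -/
noncomputable def Qbil (x y : Fin 6 → ℂ) : ℂ := x ⬝ᵥ (QC *ᵥ y)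

/-- The monodromy logarithm `N_x` (modulo weight-filtration level, eq. (6.6)). -/
def NxC : Matrix (Fin 6) (Fin 6) ℂ :=
  !![0, -1, 0, 0, 0, 0;
     0, 0, 0, -10, -5, 0;
     0, 0, 0, -10, -10, 0;
     0, 0, 0, 0, 0, 0;
     0, 0, 0, 0, 0, 1;
     0, 0, 0, 0, 0, 0]

/-- The monodromy logarithm `N_y` (modulo weight-filtration level, eq. (6.6)). -/
def NyC : Matrix (Fin 6) (Fin 6) ℂ :=
  !![0, 0, -1, 0, 0, 0;
     0, 0, 0, -10, -10, 0;
     0, 0, 0, -5, -10, 0;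
     0, 0, 0, 0, 0, 1;
     0, 0, 0, 0, 0, 0;
     0, 0, 0, 0, 0, 0]

/-!
`S = N_x + N_y` is nilpotent, `S ^ 4 = 0`, and moves `v = z e₁ + e₆` along the chain
`v ↦ e₄ + e₅ ↦ -35 (e₂ + e₃) ↦ 70 e₁ ↦ 0`. Hence `exp (c S) v` is an explicit polynomial vector in
`c`, and since `S` is real, its conjugate is the same vector at `(conj z, conj c)`. Pairing the two
under `Q` gives `conj z - z - (280/3) c³`, which at `c = i h` is `i (280 h³/3 - 2 b)`.
-/

open scoped Nat

theorem NormedSpace.exp_eq_sum_range_of_pow_eq_zero (𝕂 : Type*) {𝔸 : Type*} [Field 𝕂] [CharZero 𝕂]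
    [Ring 𝔸] [Algebra 𝕂 𝔸] [TopologicalSpace 𝔸] [IsTopologicalRing 𝔸] {x : 𝔸} {k : ℕ}
    (hx : x ^ k = 0) : exp x = ∑ n ∈ Finset.range k, (n !⁻¹ : 𝕂) • x ^ n := by
  rw [exp_eq_tsum 𝕂]
  refine tsum_eq_sum fun n hn => ?_
  obtain ⟨m, rfl⟩ := Nat.exists_eq_add_of_le (by simpa using hn)
  rw [pow_add, hx, zero_mul, smul_zero]

lemma NxC_add_NyC_pow_four : (NxC + NyC) ^ 4 = 0 := by
  ext i j
  fin_cases i <;> fin_cases j <;> simp [pow_succ, mul_apply, Fin.sum_univ_succ, NxC, NyC]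

lemma NxC_add_NyC_mulVec_base (z : ℂ) :
    (NxC + NyC) *ᵥ ![z, 0, 0, 0, 0, 1] = ![0, 0, 0, 1, 1, 0] := by
  ext i; fin_cases i <;> simp [NxC, NyC, mulVec, dotProduct, Fin.sum_univ_succ]

lemma NxC_add_NyC_mulVec_e₄_add_e₅ :
    (NxC + NyC) *ᵥ ![0, 0, 0, 1, 1, 0] = ![0, -35, -35, 0, 0, 0] := by
  ext i; fin_cases i <;> norm_num [NxC, NyC, mulVec, dotProduct, Fin.sum_univ_succ]

lemma NxC_add_NyC_mulVec_e₂_add_e₃ :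
    (NxC + NyC) *ᵥ ![0, -35, -35, 0, 0, 0] = ![70, 0, 0, 0, 0, 0] := by
  ext i; fin_cases i <;> norm_num [NxC, NyC, mulVec, dotProduct, Fin.sum_univ_succ]

noncomputable def orbitVec (z c : ℂ) : Fin 6 → ℂ :=
  ![z + 35 / 3 * c ^ 3, -(35 / 2) * c ^ 2, -(35 / 2) * c ^ 2, c, c, 1]

lemma exp_smul_NxC_add_NyC_mulVec (z c : ℂ) :
    exp (c • (NxC + NyC)) *ᵥ ![z, 0, 0, 0, 0, 1] = orbitVec z c := by
  rw [exp_eq_sum_range_of_pow_eq_zero ℂ (k := 4) (by rw [smul_pow, NxC_add_NyC_pow_four, smul_zero]),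
    sum_mulVec]
  simp only [Finset.sum_range_succ, Finset.sum_range_zero, smul_mulVec, smul_pow, pow_succ, pow_zero,
    one_mul, ← mulVec_mulVec, one_mulVec, NxC_add_NyC_mulVec_base, NxC_add_NyC_mulVec_e₄_add_e₅,
    NxC_add_NyC_mulVec_e₂_add_e₃]
  ext i; fin_cases i <;> simp [orbitVec] <;> ring

lemma star_orbitVec (z c : ℂ) : star (orbitVec z c) = orbitVec (star z) (star c) := by
  ext i; fin_cases i <;> simp [orbitVec]

lemma Qbil_orbitVec (z c z' c' : ℂ) :
    Qbil (orbitVec z c) (orbitVec z' c') =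
      z' - z + 35 / 3 * (c' ^ 3 - c ^ 3) + 35 * c * c' * (c - c') := by
  simp [Qbil, QC, orbitVec, mulVec, dotProduct, Fin.sum_univ_succ]
  ring

/-- The Hodge–Riemann positivity computation of Appendix A.2: with
`v = (a+bi)e₁ + e₆` and `S = N_x + N_y`, for every real `h`,
`(−i)·Q(e^{ihS}v, conj(e^{ihS}v)) = (280h³ − 6b)/3`. -/
theorem stmt_14 (a b : ℝ) (h : ℝ) (v : Fin 6 → ℂ)
    (hv : v = ![(a : ℂ) + (b : ℂ) * Complex.I, 0, 0, 0, 0, 1]) :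
    (-Complex.I) *
        Qbil (exp ((Complex.I * (h : ℂ)) • (NxC + NyC)) *ᵥ v)
          (star (exp ((Complex.I * (h : ℂ)) • (NxC + NyC)) *ᵥ v))
      = (280 * (h : ℂ) ^ 3 - 6 * (b : ℂ)) / 3 := by
  have star_c : star (Complex.I * (h : ℂ)) = -(Complex.I * h) := by simp
  have star_z : star ((a : ℂ) + b * Complex.I) = a - b * Complex.I := by
    simp [sub_eq_add_neg]
  rw [hv, exp_smul_NxC_add_NyC_mulVec, star_orbitVec, Qbil_orbitVec, star_c, star_z]
  linear_combination (2 * b + 280 / 3 * h ^ 3 * (Complex.I ^ 2 - 1)) * Complex.I_sq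
end

section
/- Let N_x^full be the 6×6 rational matrix whose only nonzero entries are (1,2) = −1, (1,5) = 1/2, (1,6) = 25/6, (2,4) = −10, (2,5) = −5, (2,6) = 1/2, (3,4) = −10, (3,5) = −10, (5,6) = 1, and let N_y^full be the 6×6 rational matrix whose only nonzero entries are (1,3) = −1, (1,4) = 1/2, (1,6) = 25/6, (2,4) = −10, (2,5) = −10, (3,4) = −5, (3,5) = −10, (3,6) = 1/2, (4,6) = 1. Then the matrix D := N_x^full − N_y^full satisfies D³ = 0, D² ≠ 0, and D has rank 4; consequently D has Jordan type (3,3), i.e., two Jordan blocks of size 3. -/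
open Matrix

/-- The full monodromy logarithm `N_x` of the Hosono–Takagi family (eq. (5.8)). -/
def NxFull : Matrix (Fin 6) (Fin 6) ℚ :=
  !![0, -1, 0, 0, 1/2, 25/6;
     0, 0, 0, -10, -5, 1/2;
     0, 0, 0, -10, -10, 0;
     0, 0, 0, 0, 0, 0;
     0, 0, 0, 0, 0, 1;
     0, 0, 0, 0, 0, 0]

/-- The full monodromy logarithm `N_y` of the Hosono–Takagi family (eq. (5.8)). -/
def NyFull : Matrix (Fin 6) (Fin 6) ℚ :=
  !![0, 0, -1, 1/2, 0, 25/6;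
     0, 0, 0, -10, -10, 0;
     0, 0, 0, -5, -10, 1/2;
     0, 0, 0, 0, 0, 1;
     0, 0, 0, 0, 0, 0;
     0, 0, 0, 0, 0, 0]

/-- The nilpotent Jordan matrix with two Jordan blocks of size 3 (eigenvalue 0). -/
def J33 : Matrix (Fin 6) (Fin 6) ℚ :=
  !![0, 1, 0, 0, 0, 0;
     0, 0, 1, 0, 0, 0;
     0, 0, 0, 0, 0, 0;
     0, 0, 0, 0, 1, 0;
     0, 0, 0, 0, 0, 1;
     0, 0, 0, 0, 0, 0]

namespace HTproof

lemma cv5 {α : Type*} (x : α) (u : Fin 5 → α) : Matrix.vecCons x u 5 = u 4 := rfl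
lemma cv4 {α : Type*} (x : α) (u : Fin 4 → α) : Matrix.vecCons x u 4 = u 3 := rfl
lemma cv3 {α : Type*} (x : α) (u : Fin 3 → α) : Matrix.vecCons x u 3 = u 2 := rfl
lemma cv2 {α : Type*} (x : α) (u : Fin 2 → α) : Matrix.vecCons x u 2 = u 1 := rfl
lemma cv1 {α : Type*} (x : α) (u : Fin 1 → α) : Matrix.vecCons x u 1 = u 0 := rfl

/-- The Jordan basis matrix: columns are the two Jordan chains `D²e₄, De₄, e₄` and
`D²e₆, De₆, e₆`. -/
def Pm : Matrix (Fin 6) (Fin 6) ℚ :=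
  !![-5, -1/2, 0, 0, 0, 0;
     0, 0, 0, 5, 1/2, 0;
     0, -5, 0, 5, -1/2, 0;
     0, 0, 1, 0, -1, 0;
     0, 0, 0, 0, 1, 0;
     0, 0, 0, 0, 0, 1]

/-- The inverse of the Jordan basis matrix. -/
def PmInv : Matrix (Fin 6) (Fin 6) ℚ :=
  !![-1/5, -1/50, 1/50, 0, 1/50, 0;
     0, 1/5, -1/5, 0, -1/5, 0;
     0, 0, 0, 1, 1, 0;
     0, 1/5, 0, 0, -1/10, 0;
     0, 0, 0, 0, 1, 0;
     0, 0, 0, 0, 0, 1]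

lemma vec6_1 {α : Type*} (a b c d e f : α) : ![a,b,c,d,e,f] 1 = b := rfl
lemma vec6_2 {α : Type*} (a b c d e f : α) : ![a,b,c,d,e,f] 2 = c := rfl
lemma vec6_3 {α : Type*} (a b c d e f : α) : ![a,b,c,d,e,f] 3 = d := rfl
lemma vec6_4 {α : Type*} (a b c d e f : α) : ![a,b,c,d,e,f] 4 = e := rfl
lemma vec6_5 {α : Type*} (a b c d e f : α) : ![a,b,c,d,e,f] 5 = f := rfl

set_option maxHeartbeats 2000000 in
lemma hPP : Pm * PmInv = 1 := by
  ext i j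
  fin_cases i <;> fin_cases j <;>
    simp [Pm, PmInv, Matrix.mul_apply, Fin.sum_univ_succ, Matrix.one_apply, cv5, cv4, cv3, cv2, cv1] <;>
    (first | rfl | norm_num)

lemma hPP' : PmInv * Pm = 1 := mul_eq_one_comm.mp hPP

set_option maxHeartbeats 2000000 in
lemma hDeq : NxFull - NyFull = Pm * J33 * PmInv := by
  ext i j
  fin_cases i <;> fin_cases j <;>
    simp [NxFull, NyFull, Pm, PmInv, J33, Matrix.mul_apply, Fin.sum_univ_succ,
      Matrix.sub_apply, cv5, cv4, cv3, cv2, cv1] <;>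
    (first | rfl | norm_num)

/-- The square of `D`. -/
def D2lit : Matrix (Fin 6) (Fin 6) ℚ :=
  !![0,0,0,-5,-5,0; 0,0,0,0,0,5; 0,0,0,0,0,5;
     0,0,0,0,0,0; 0,0,0,0,0,0; 0,0,0,0,0,0]

set_option maxHeartbeats 2000000 in
lemma hD2 : (NxFull - NyFull) ^ 2 = D2lit := by
  rw [sq]
  ext i j
  fin_cases i <;> fin_cases j <;>
    simp [D2lit, NxFull, NyFull, Matrix.mul_apply, Fin.sum_univ_succ, Matrix.sub_apply, cv5, cv4, cv3, cv2, cv1] <;>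
    (first | rfl | norm_num)

set_option maxHeartbeats 2000000 in
lemma hD3 : (NxFull - NyFull) ^ 3 = 0 := by
  rw [pow_succ, hD2]
  ext i j
  fin_cases i <;> fin_cases j <;>
    simp [D2lit, NxFull, NyFull, Matrix.mul_apply, Fin.sum_univ_succ, Matrix.sub_apply,
      Matrix.vecHead, Matrix.vecTail, cv5, cv4, cv3, cv2, cv1] <;>
    (first | rfl | norm_num)

set_option maxHeartbeats 2000000 in
lemma hJJt : J33 * J33ᵀ = Matrix.diagonal ![1, 1, 0, 1, 1, 0] := by
  ext i j
  fin_cases i <;> fin_cases j <;>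
    simp [J33, Matrix.mul_apply, Fin.sum_univ_succ, Matrix.transpose_apply,
      Matrix.diagonal, cv5, cv4, cv3, cv2, cv1] <;>
    (first | rfl | norm_num)

lemma hJrank : J33.rank = 4 := by
  have h2 := Matrix.rank_self_mul_transpose J33
  rw [hJJt, Matrix.rank_diagonal] at h2
  rw [← h2, Fintype.card_subtype]
  decide

end HTproof

/-- Section 7: the rational nilpotent `D = N_x − N_y` satisfies `D³ = 0`, `D² ≠ 0`, has
rank 4, and consequently has Jordan type (3,3): it is conjugate to the matrix with two
nilpotent Jordan blocks of size 3. -/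
theorem stmt_16 (D : Matrix (Fin 6) (Fin 6) ℚ) (hD : D = NxFull - NyFull) :
    D ^ 3 = 0 ∧ D ^ 2 ≠ 0 ∧ D.rank = 4 ∧
      ∃ P : Matrix (Fin 6) (Fin 6) ℚ, IsUnit P.det ∧ D = P * J33 * P⁻¹ := by
  subst hD
  refine ⟨HTproof.hD3, ?_, ?_, HTproof.Pm,
    Matrix.isUnit_det_of_right_inverse HTproof.hPP, ?_⟩
  · intro h
    have := congrFun (congrFun (HTproof.hD2.symm.trans h) 0) 3
    simp [HTproof.D2lit, Matrix.zero_apply] at this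
  · rw [HTproof.hDeq,
      Matrix.rank_mul_eq_left_of_isUnit_det HTproof.PmInv (HTproof.Pm * J33)
        (Matrix.isUnit_det_of_right_inverse HTproof.hPP'),
      Matrix.rank_mul_eq_right_of_isUnit_det HTproof.Pm J33
        (Matrix.isUnit_det_of_right_inverse HTproof.hPP),
      HTproof.hJrank]
  · rw [Matrix.inv_eq_right_inv HTproof.hPP]
    exact HTproof.hDeq
end
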